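/- arXiv:1511.06023 — 4 statements merged into one kernel-verified Lean document; each statement's English description precedes it below -/
import Mathlib

section
/- Let T be a finite tree and let d_1 and d_2 be positive integers such that d_2 ≥ ⌈3·d_1/2⌉ and N^{d_1}[u] ∪ N^{d_2}[v] ≠ V(T) for every two vertices u and v of T. Then there exist two vertices x and z of T and a subtree T' of T such that T' has at most n(T) − (⌈3·d_1/2⌉ + d_2 + 2) vertices and V(T) \ V(T') ⊆ N^{d_1}[x] ∪ N^{d_2}[z]. -/
/-- `ball G u k` is `N^k[u]`: the set of vertices `v` reachable from `u`
with `dist_G(u,v) ≤ k`. -/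
def ball {V : Type*} (G : SimpleGraph V) (u : V) (k : ℕ) : Set V :=
  {v | G.Reachable u v ∧ G.dist u v ≤ k}

/-- The burning number of `G`: the minimum length `k` of a sequence
`(x_1, …, x_k)` of vertices with `V(G) = N^{k-1}[x_1] ∪ ⋯ ∪ N^0[x_k]`. -/
noncomputable def burningNumber {V : Type*} (G : SimpleGraph V) : ℕ :=
  sInf {k | ∃ x : Fin k → V, ∀ v : V, ∃ i : Fin k, v ∈ ball G (x i) (k - 1 - (i : ℕ))}

/-!
Fix a diametral path `v 0, …, v L` from `a` to `b` and record, for each vertex `u`, the index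
`m u` of the path vertex nearest to `u` and the distance `δ u` to it. No single `d₂`-ball covers
`T`, so `L > 2 d₂`. Put `c = ⌈3 d₁ / 2⌉`. If every `u` with `d₁ < m u ≤ c` satisfies
`δ u + m u ≤ 2 d₁`, the `d₁`-ball at `v d₁` covers `A = {u | m u ≤ c}`, which has at least
`c + 1` vertices. Otherwise some such `u` has `δ u ≥ 2 d₁ + 1 - c`, and the `d₂`-ball at
`v d₂` covers `A = {u | m u ≤ d₂}`, which contains `v 0, …, v d₂` and the `δ u` off-path vertices
of the geodesic from `u` to the path; since `2 c ≤ 3 d₁ + 1` this is again enough.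

In both cases `Aᶜ` is star-shaped towards `b`. Let `r` be the other radius, and call `u` a
descendant of `y` if the geodesic from `u` to `b` passes through `y`. Choose `y` as far from `b`
as possible with a descendant `u₁ ∈ Aᶜ` at distance at least `r`. By maximality all descendants
of `y` in `Aᶜ` lie in the `r`-ball at `y`; they include the geodesic from `y` to `u₁`, so there are
at least `r + 1` of them; and removing them leaves a set still star-shaped towards `b`, hence a
subtree.
-/

namespace SimpleGraph

variable {V : Type*} {G : SimpleGraph V}

def geodesicInterval (G : SimpleGraph V) (u w : V) : Set V :=
  {x | G.dist u x + G.dist x w = G.dist u w}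

lemma mem_geodesicInterval {u w x : V} :
    x ∈ G.geodesicInterval u w ↔ G.dist u x + G.dist x w = G.dist u w := Iff.rfl

lemma geodesicInterval_comm (u w : V) : G.geodesicInterval u w = G.geodesicInterval w u := by
  ext x
  rw [mem_geodesicInterval, mem_geodesicInterval, G.dist_comm (u := u) (v := x),
    G.dist_comm (u := x) (v := w), G.dist_comm (u := u) (v := w), add_comm]

lemma right_mem_geodesicInterval (u w : V) : w ∈ G.geodesicInterval u w := by
  simp [mem_geodesicInterval]

lemma mem_geodesicInterval_trans (hG : G.Connected) {u w x y : V}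
    (hx : x ∈ G.geodesicInterval u y) (hy : y ∈ G.geodesicInterval u w) :
    x ∈ G.geodesicInterval u w ∧ y ∈ G.geodesicInterval x w := by
  simp only [mem_geodesicInterval] at hx hy ⊢
  have := hG.dist_triangle (u := u) (v := x) (w := w)
  have := hG.dist_triangle (u := x) (v := y) (w := w)
  omega

lemma Walk.dist_getVert_le {u w : V} (p : G.Walk u w) (n : ℕ) : G.dist u (p.getVert n) ≤ n :=
  (dist_le (p.take n)).trans (by simp)

lemma Walk.dist_getVert_getVert_le {u w : V} (p : G.Walk u w) {i j : ℕ} (hij : i ≤ j) :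
    G.dist (p.getVert i) (p.getVert j) ≤ j - i := by
  simpa [Nat.add_sub_cancel' hij] using (p.drop i).dist_getVert_le (j - i)

lemma Walk.dist_getVert_of_length_eq_dist {u w : V} (p : G.Walk u w)
    (hp : p.length = G.dist u w) {j : ℕ} (hj : j ≤ p.length) :
    G.dist u (p.getVert j) = j ∧ G.dist (p.getVert j) w = p.length - j := by
  have := p.dist_getVert_le j
  have : G.dist (p.getVert j) w ≤ p.length - j := (dist_le (p.drop j)).trans (by simp)
  have := (p.take j).reachable.dist_triangle_left w
  omega

lemma Reachable.exists_mem_geodesicInterval_dist_eq {u w : V} (h : G.Reachable u w) {t : ℕ}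
    (ht : t ≤ G.dist u w) : ∃ x ∈ G.geodesicInterval u w, G.dist u x = t := by
  obtain ⟨p, hp⟩ := h.exists_walk_length_eq_dist
  have := p.dist_getVert_of_length_eq_dist hp (j := t) (by omega)
  exact ⟨p.getVert t, by rw [mem_geodesicInterval]; omega, this.1⟩

lemma Reachable.le_ncard_geodesicInterval [Finite V] {u w : V} (h : G.Reachable u w) :
    G.dist u w + 1 ≤ (G.geodesicInterval u w).ncard := by
  obtain ⟨p, hp⟩ := h.exists_walk_length_eq_dist
  have hdist (j : ℕ) (hj : j ≤ G.dist u w) :=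
    p.dist_getVert_of_length_eq_dist hp (j := j) (hp ▸ hj)
  calc G.dist u w + 1 = (Set.Iic (G.dist u w)).ncard := by simp
    _ ≤ _ := Set.ncard_le_ncard_of_injOn p.getVert
      (fun j (hj : j ≤ _) => by have := hdist j hj; rw [mem_geodesicInterval]; omega)
      (fun i hi j hj hij => by rw [← (hdist i hi).1, ← (hdist j hj).1, hij])

lemma Connected.connected_induce_of_geodesicInterval_subset (hG : G.Connected) {S : Set V}
    {b : V} (hS : ∀ u ∈ S, G.geodesicInterval u b ⊆ S) (hne : S.Nonempty) :
    (G.induce S).Connected := by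
  obtain ⟨u₀, hu₀⟩ := hne
  have hb : b ∈ S := hS u₀ hu₀ (right_mem_geodesicInterval u₀ b)
  have key : ∀ n, ∀ u (hu : u ∈ S), G.dist u b ≤ n →
      (G.induce S).Reachable ⟨u, hu⟩ ⟨b, hb⟩ := by
    intro n
    induction n with
    | zero =>
      intro u hu hd
      obtain rfl : u = b := hG.dist_eq_zero_iff.mp (by omega)
      rfl
    | succ n ih =>
      intro u hu hd
      obtain rfl | hub := eq_or_ne u b
      · rfl
      obtain ⟨x, hx, hux⟩ := (hG u b).exists_mem_geodesicInterval_dist_eq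
        (hG.pos_dist_of_ne hub)
      have hadj : (G.induce S).Adj ⟨u, hu⟩ ⟨x, hS u hu hx⟩ :=
        (dist_eq_one_iff_adj (G := G)).mp hux
      exact hadj.reachable.trans (ih x _ (by rw [mem_geodesicInterval] at hx; omega))
  rw [connected_iff_exists_forall_reachable]
  exact ⟨⟨b, hb⟩, fun ⟨u, hu⟩ => (key _ u hu le_rfl).symm⟩

lemma Walk.exists_eq_append_of_mem {u a : V} (q : G.Walk u a) {S : Set V} (ha : a ∈ S) :
    ∃ (w : V) (q₁ : G.Walk u w) (q₂ : G.Walk w a), q = q₁.append q₂ ∧ w ∈ S ∧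
      ∀ s ∈ q₁.support, s ∈ S → s = w := by
  induction q with
  | nil => exact ⟨_, nil, nil, rfl, ha, by simp⟩
  | @cons u _ _ h q ih =>
    by_cases hu : u ∈ S
    · exact ⟨u, nil, cons h q, rfl, hu, by simp⟩
    · obtain ⟨w, q₁, q₂, rfl, hw, hfirst⟩ := ih ha
      refine ⟨w, cons h q₁, q₂, rfl, hw, ?_⟩
      simp only [support_cons, List.mem_cons, forall_eq_or_imp]
      exact ⟨fun hu' => absurd hu' hu, hfirst⟩

lemma IsTree.length_eq_dist_of_isPath (hT : G.IsTree) {u w : V} {p : G.Walk u w}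
    (hp : p.IsPath) : p.length = G.dist u w := by
  obtain ⟨q, hq, hql⟩ := hT.connected.exists_path_of_dist u w
  rw [(hT.existsUnique_path u w).unique hp hq, hql]

lemma IsTree.exists_mem_support_mem_geodesicInterval (hT : G.IsTree) {a b : V}
    {p : G.Walk a b} (hp : p.IsPath) (u : V) :
    ∃ w ∈ p.support, w ∈ G.geodesicInterval u a ∧ w ∈ G.geodesicInterval u b := by
  classical
  obtain ⟨q, hq, -⟩ := hT.existsUnique_path u a
  obtain ⟨w, q₁, q₂, rfl, hw, hfirst⟩ :=
    q.exists_eq_append_of_mem (S := {x | x ∈ p.support}) p.start_mem_support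
  have hw : w ∈ p.support := hw
  set r := p.dropUntil w hw
  have hr : r.IsPath := hp.dropUntil hw
  have hq₁r : (q₁.append r).IsPath := by
    rw [Walk.isPath_def, Walk.support_append]
    refine hq.of_append_left.support_nodup.append hr.support_nodup.tail fun s hs₁ hs₂ => ?_
    obtain rfl :=
      hfirst s hs₁ (p.support_dropUntil_subset_support hw (List.mem_of_mem_tail hs₂))
    have hnd := hr.support_nodup
    rw [← r.cons_tail_support] at hnd
    exact (List.nodup_cons.mp hnd).1 hs₂
  refine ⟨w, hw, ?_, ?_⟩ <;> rw [mem_geodesicInterval]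
  · rw [← hT.length_eq_dist_of_isPath hq, ← hT.length_eq_dist_of_isPath hq.of_append_left,
      ← hT.length_eq_dist_of_isPath hq.of_append_right, Walk.length_append]
  · rw [← hT.length_eq_dist_of_isPath hq₁r, ← hT.length_eq_dist_of_isPath hq.of_append_left,
      ← hT.length_eq_dist_of_isPath hr, Walk.length_append]

end SimpleGraph

section

variable {V : Type*} {G : SimpleGraph V}

lemma mem_ball_of_dist_le (hG : G.Connected) {x y : V} {r : ℕ} (h : G.dist x y ≤ r) :
    y ∈ ball G x r :=
  ⟨hG x y, h⟩

theorem exists_branch_subset_ball [Finite V] (hG : G.Connected) {U : Set V} {b u₀ : V}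
    {d : ℕ} (hU : ∀ u ∈ U, G.geodesicInterval u b ⊆ U) (hu₀ : u₀ ∈ U) (hd : d ≤ G.dist u₀ b) :
    ∃ y, {u ∈ U | y ∈ G.geodesicInterval u b} ⊆ ball G y d ∧
      d + 1 ≤ {u ∈ U | y ∈ G.geodesicInterval u b}.ncard := by
  set P := {y | ∃ u ∈ U, y ∈ G.geodesicInterval u b ∧ d ≤ G.dist y u}
  have hbP : b ∈ P := ⟨u₀, hu₀, G.right_mem_geodesicInterval _ _, by rwa [G.dist_comm]⟩
  obtain ⟨y, ⟨u₁, hu₁, hyu₁, hdu₁⟩, hmax⟩ :=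
    Set.exists_max_image P (fun y => G.dist y b) (Set.toFinite P) ⟨b, hbP⟩
  refine ⟨y, fun u ⟨hu, hyu⟩ => mem_ball_of_dist_le hG ?_, ?_⟩
  · by_contra! hfar
    obtain ⟨y', hy', hyy'⟩ := (hG y u).exists_mem_geodesicInterval_dist_eq (t := 1) (by omega)
    obtain ⟨hy'u, hyy'b⟩ := SimpleGraph.mem_geodesicInterval_trans hG
      (by rwa [SimpleGraph.geodesicInterval_comm]) hyu
    have hy'P : y' ∈ P := ⟨u, hu, hy'u, by
      rw [SimpleGraph.mem_geodesicInterval] at hy'; omega⟩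
    have := hmax y' hy'P
    rw [SimpleGraph.mem_geodesicInterval, G.dist_comm] at hyy'b
    omega
  · calc d + 1 ≤ (G.geodesicInterval y u₁).ncard :=
          (Nat.succ_le_succ hdu₁).trans (hG y u₁).le_ncard_geodesicInterval
      _ ≤ _ := Set.ncard_le_ncard fun s hs => by
          rw [SimpleGraph.geodesicInterval_comm] at hs
          obtain ⟨hsb, hys⟩ := SimpleGraph.mem_geodesicInterval_trans hG hs hyu₁
          exact ⟨hU u₁ hu₁ hsb, hys⟩

theorem exists_connected_compl_subset_ball_union [Fintype V] (hG : G.Connected) {A : Set V}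
    {b x : V} {r₁ r₂ k : ℕ} (hAc : ∀ u ∈ Aᶜ, G.geodesicInterval u b ⊆ Aᶜ)
    (hA : A ⊆ ball G x r₁) (hk : k ≤ A.ncard)
    (hcover : ∀ z, ball G x r₁ ∪ ball G z r₂ ≠ Set.univ) :
    ∃ (z : V) (S : Set V), (S.Nonempty → (G.induce S).Connected) ∧
      S.ncard ≤ Fintype.card V - (k + r₂ + 1) ∧ Sᶜ ⊆ ball G x r₁ ∪ ball G z r₂ := by
  obtain ⟨u₀, hu₀, hfar⟩ : ∃ u₀ ∈ Aᶜ, r₂ ≤ G.dist u₀ b := by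
    by_contra! hnear
    refine hcover b (Set.eq_univ_of_forall fun u => ?_)
    by_cases hu : u ∈ A
    · exact Or.inl (hA hu)
    · exact Or.inr (mem_ball_of_dist_le hG (G.dist_comm ▸ (hnear u hu).le))
  obtain ⟨y, hW, hWcard⟩ := exists_branch_subset_ball hG hAc hu₀ hfar
  set W := {u ∈ Aᶜ | y ∈ G.geodesicInterval u b}
  set S := Aᶜ \ {u | y ∈ G.geodesicInterval u b}
  refine ⟨y, S, hG.connected_induce_of_geodesicInterval_subset (b := b) ?_, ?_, ?_⟩
  · rintro u ⟨hu, hyu⟩ s hs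
    refine ⟨hAc u hu hs, fun (hys : y ∈ G.geodesicInterval s b) => hyu ?_⟩
    show y ∈ G.geodesicInterval u b
    rw [SimpleGraph.geodesicInterval_comm] at hs hys ⊢
    exact (SimpleGraph.mem_geodesicInterval_trans hG hys hs).1
  · have hdisj : Disjoint A W := Set.disjoint_left.mpr fun u hu hw => hw.1 hu
    have hsub : S ⊆ (A ∪ W)ᶜ := fun u ⟨hu, hyu⟩ hAW => hAW.elim hu fun hw => hyu hw.2
    calc S.ncard ≤ (A ∪ W)ᶜ.ncard := Set.ncard_le_ncard hsub
      _ = Fintype.card V - (A.ncard + W.ncard) := by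
        rw [Set.ncard_compl, Set.ncard_union_eq hdisj, Nat.card_eq_fintype_card]
      _ ≤ _ := by omega
  · intro u hu
    by_cases huA : u ∈ A
    · exact Or.inl (hA huA)
    · exact Or.inr (hW ⟨huA, not_not.mp fun hyu => hu ⟨huA, hyu⟩⟩)

end

/-- Coordinates relative to a diametral path `v 0, …, v L`: the vertex `u` lies at distance `δ u`
from the path vertex `v (m u)`, and `(j - m u) + (m u - j)` is `|j - m u|`. -/
structure DiametralCoords {V : Type*} (G : SimpleGraph V) where
  L : ℕ
  v : ℕ → V
  m : V → ℕ
  δ : V → ℕ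
  dist_le : ∀ x y, G.dist x y ≤ L
  m_le : ∀ u, m u ≤ L
  dist_v : ∀ u j, j ≤ L → G.dist u (v j) = δ u + (j - m u) + (m u - j)

namespace DiametralCoords

variable {V : Type*} {G : SimpleGraph V} (C : DiametralCoords G)

lemma delta_le_m (u : V) : C.δ u ≤ C.m u := by
  have := C.dist_le u (C.v C.L)
  have := C.dist_v u C.L le_rfl
  have := C.m_le u
  omega

lemma delta_add_m_le (u : V) : C.δ u + C.m u ≤ C.L := by
  have := C.dist_le u (C.v 0)
  have := C.dist_v u 0 (Nat.zero_le _)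
  omega

lemma eq_v_of_delta_eq_zero (hG : G.Connected) {u : V} (hu : C.δ u = 0) : u = C.v (C.m u) :=
  hG.dist_eq_zero_iff.mp (by rw [C.dist_v u _ (C.m_le u)]; omega)

lemma m_le_of_mem_geodesicInterval (hG : G.Connected) {u x : V}
    (hx : x ∈ G.geodesicInterval u (C.v C.L)) : C.m u ≤ C.m x := by
  rw [SimpleGraph.mem_geodesicInterval] at hx
  have := hG.dist_triangle (u := u) (v := x) (w := C.v (C.m x))
  have := C.dist_v u _ (C.m_le x)
  have := C.dist_v x _ (C.m_le x)
  have := C.dist_v u _ le_rfl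
  have := C.dist_v x _ le_rfl
  have := C.m_le u
  omega

lemma m_eq_of_mem_geodesicInterval (hG : G.Connected) {u s : V}
    (hs : s ∈ G.geodesicInterval u (C.v (C.m u))) : C.m s = C.m u := by
  rw [SimpleGraph.mem_geodesicInterval] at hs
  have := hG.dist_triangle (u := u) (v := s) (w := C.v (C.m s))
  have := C.dist_v u _ (C.m_le s)
  have := C.dist_v s _ (C.m_le s)
  have := C.dist_v u _ (C.m_le u)
  have := C.dist_v s _ (C.m_le u)
  omega

lemma le_ncard_delta_eq_zero [Finite V] (hG : G.Connected) {k : ℕ} (hk : k ≤ C.L) :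
    k + 1 ≤ {u | C.m u ≤ k ∧ C.δ u = 0}.ncard := by
  have h₀ := C.dist_v (C.v 0) 0 (Nat.zero_le _)
  have hk' := C.dist_v (C.v 0) k hk
  rw [SimpleGraph.dist_self] at h₀
  calc k + 1 ≤ (G.geodesicInterval (C.v 0) (C.v k)).ncard := by
        have := (hG (C.v 0) (C.v k)).le_ncard_geodesicInterval
        omega
    _ ≤ _ := Set.ncard_le_ncard fun s hs => by
        rw [SimpleGraph.mem_geodesicInterval, G.dist_comm] at hs
        have := C.dist_v s 0 (Nat.zero_le _)
        have := C.dist_v s k hk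
        exact ⟨by omega, by omega⟩

lemma le_ncard_delta_pos [Finite V] (hG : G.Connected) (u : V) :
    C.δ u ≤ {s | C.m s = C.m u ∧ 0 < C.δ s}.ncard := by
  have := C.dist_v u _ (C.m_le u)
  calc C.δ u ≤ (G.geodesicInterval u (C.v (C.m u))).ncard - 1 := by
        have := (hG u (C.v (C.m u))).le_ncard_geodesicInterval
        omega
    _ ≤ (G.geodesicInterval u (C.v (C.m u)) \ {C.v (C.m u)}).ncard :=
        Set.pred_ncard_le_ncard_sdiff_singleton _ _
    _ ≤ _ := Set.ncard_le_ncard fun s ⟨hs, hsv⟩ => by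
        have hms := C.m_eq_of_mem_geodesicInterval hG hs
        refine ⟨hms, Nat.pos_of_ne_zero fun h₀ => hsv ?_⟩
        rw [C.eq_v_of_delta_eq_zero hG h₀, hms]
        rfl

lemma add_le_ncard_m_le [Finite V] (hG : G.Connected) {k : ℕ} (hk : k ≤ C.L) {u : V}
    (hu : C.m u ≤ k) : k + 1 + C.δ u ≤ {s | C.m s ≤ k}.ncard := by
  have hdisj : Disjoint {s | C.m s ≤ k ∧ C.δ s = 0} {s | C.m s = C.m u ∧ 0 < C.δ s} :=
    Set.disjoint_left.mpr fun s h₁ h₂ => by simp_all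
  calc k + 1 + C.δ u
      ≤ {s | C.m s ≤ k ∧ C.δ s = 0}.ncard + {s | C.m s = C.m u ∧ 0 < C.δ s}.ncard :=
        add_le_add (C.le_ncard_delta_eq_zero hG hk) (C.le_ncard_delta_pos hG u)
    _ = ({s | C.m s ≤ k ∧ C.δ s = 0} ∪ {s | C.m s = C.m u ∧ 0 < C.δ s}).ncard :=
        (Set.ncard_union_eq hdisj).symm
    _ ≤ _ := Set.ncard_le_ncard
        (Set.union_subset (fun s hs => hs.1) fun s (hs : _ ∧ _) => show C.m s ≤ k by omega)

lemma setOf_m_le_subset_ball (hG : G.Connected) {r k : ℕ} (hr : r ≤ C.L)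
    (hdeep : ∀ u, r < C.m u → C.m u ≤ k → C.δ u + C.m u ≤ 2 * r) :
    {u | C.m u ≤ k} ⊆ ball G (C.v r) r := fun u (hu : C.m u ≤ k) => by
  refine mem_ball_of_dist_le hG ?_
  rw [G.dist_comm, C.dist_v u r hr]
  have := C.delta_le_m u
  by_cases hru : r < C.m u
  · have := hdeep u hru hu
    omega
  · omega

lemma ball_eq_univ (hG : G.Connected) {r : ℕ} (hr : C.L ≤ 2 * r) :
    ball G (C.v (C.L - r)) r = Set.univ :=
  Set.eq_univ_of_forall fun u => mem_ball_of_dist_le hG <| by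
    rw [G.dist_comm, C.dist_v u _ (Nat.sub_le _ _)]
    have := C.delta_le_m u
    have := C.delta_add_m_le u
    omega

end DiametralCoords

theorem SimpleGraph.IsTree.nonempty_diametralCoords {V : Type*} [Finite V] {G : SimpleGraph V}
    (hT : G.IsTree) : Nonempty (DiametralCoords G) := by
  have hG := hT.connected
  have := hG.nonempty
  have hdiam (x y : V) : G.dist x y ≤ G.diam :=
    G.dist_le_diam (G.connected_iff_ediam_ne_top.mp hG)
  obtain ⟨a, b, hab⟩ := G.exists_dist_eq_diam
  obtain ⟨p, hp, hpl⟩ := hG.exists_path_of_dist a b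
  choose w hwp hwa hwb using hT.exists_mem_support_mem_geodesicInterval hp
  have hv (j : ℕ) (hj : j ≤ G.diam) :=
    p.dist_getVert_of_length_eq_dist hpl (j := j) (by omega)
  have hw (u : V) : p.getVert (G.dist a (w u)) = w u := by
    obtain ⟨t, hwt, ht⟩ := Walk.mem_support_iff_exists_getVert.mp (hwp u)
    rw [← hwt, (hv t (by omega)).1]
  refine ⟨⟨G.diam, p.getVert, fun u => G.dist a (w u), fun u => G.dist u (w u),
    hdiam, fun u => hdiam _ _, fun u j hj => ?_⟩⟩
  have hwb' := (hv _ (hdiam a (w u))).2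
  have hjv := hv j hj
  rw [hw] at hwb'
  have hwa := hwa u
  have hwb := hwb u
  rw [mem_geodesicInterval] at hwa hwb
  have := hG.dist_triangle (u := u) (v := w u) (w := p.getVert j)
  have := hG.dist_triangle (u := u) (v := p.getVert j) (w := a)
  have := hG.dist_triangle (u := u) (v := p.getVert j) (w := b)
  have := G.dist_comm (u := a) (v := u)
  have := G.dist_comm (u := a) (v := p.getVert j)
  have := G.dist_comm (u := w u) (v := a)
  rcases le_total (G.dist a (w u)) j with hij | hji
  · have := p.dist_getVert_getVert_le hij
    rw [hw] at this
    omega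
  · have := p.dist_getVert_getVert_le hji
    rw [hw, G.dist_comm] at this
    omega

theorem tree_prune_two_balls_general {V : Type*} [Fintype V] (T : SimpleGraph V) (hT : T.IsTree)
    (d₁ d₂ : ℕ) (hd₂ : (3 * d₁ + 1) / 2 ≤ d₂)
    (h : ∀ u v : V, ball T u d₁ ∪ ball T v d₂ ≠ Set.univ) :
    ∃ (x z : V) (S : Set V), (S.Nonempty → (T.induce S).Connected) ∧
      S.ncard ≤ Fintype.card V - ((3 * d₁ + 1) / 2 + d₂ + 2) ∧
      Sᶜ ⊆ ball T x d₁ ∪ ball T z d₂ := by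
  have hG := hT.connected
  obtain ⟨C⟩ := hT.nonempty_diametralCoords
  have hL : 2 * d₂ < C.L := by
    by_contra! hL
    exact h (C.v 0) _ (by rw [C.ball_eq_univ hG hL, Set.union_univ])
  have hstar (k : ℕ) :
      ∀ u ∈ {u | C.m u ≤ k}ᶜ, T.geodesicInterval u (C.v C.L) ⊆ {u | C.m u ≤ k}ᶜ :=
    fun u (hu : ¬ C.m u ≤ k) x hx (hxk : C.m x ≤ k) =>
      hu ((C.m_le_of_mem_geodesicInterval hG hx).trans hxk)
  by_cases hshallow : ∀ u, d₁ < C.m u → C.m u ≤ (3 * d₁ + 1) / 2 → C.δ u + C.m u ≤ 2 * d₁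
  · obtain ⟨z, S, hS, hcard, hcov⟩ := exists_connected_compl_subset_ball_union hG (hstar _)
      (C.setOf_m_le_subset_ball hG (by omega) hshallow)
      ((C.le_ncard_delta_eq_zero hG (by omega)).trans (Set.ncard_le_ncard fun u hu => hu.1))
      (h (C.v d₁))
    exact ⟨_, z, S, hS, hcard.trans (by omega), hcov⟩
  · push Not at hshallow
    obtain ⟨u, hu₁, hu₂, hu₃⟩ := hshallow
    obtain ⟨z, S, hS, hcard, hcov⟩ := exists_connected_compl_subset_ball_union
      (x := C.v d₂) (r₁ := d₂) (r₂ := d₁) hG (hstar d₂)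
      (C.setOf_m_le_subset_ball hG (by omega) fun _ _ h₂ => absurd h₂ (by omega))
      (C.add_le_ncard_m_le hG (by omega) (u := u) (by omega))
      fun z => by rw [Set.union_comm]; exact h z _
    exact ⟨z, _, S, hS, hcard.trans (by omega), by rwa [Set.union_comm]⟩

/-- Here `(3 * d₁ + 1) / 2` (with natural division) equals `⌈3 d₁ / 2⌉`. -/
theorem tree_prune_two_balls {V : Type*} [Fintype V] (T : SimpleGraph V) (hT : T.IsTree)
    (d₁ d₂ : ℕ) (hd₁ : 1 ≤ d₁) (hd₂pos : 1 ≤ d₂) (hd₂ : (3 * d₁ + 1) / 2 ≤ d₂)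
    (h : ∀ u v : V, ball T u d₁ ∪ ball T v d₂ ≠ Set.univ) :
    ∃ (x z : V) (S : Set V), (S.Nonempty → (T.induce S).Connected) ∧
      S.ncard ≤ Fintype.card V - ((3 * d₁ + 1) / 2 + d₂ + 2) ∧
      Sᶜ ⊆ ball T x d₁ ∪ ball T z d₂ :=
  tree_prune_two_balls_general T hT d₁ d₂ hd₂ h
end

section
/- (Roshanbin) If a forest T of order n is the disjoint union of p paths (p ≥ 1), then b(T) ≤ ⌈√n⌉ + (p − 1). -/
/-- The disjoint union of the path graphs `P_{n 0}, …, P_{n (p-1)}`: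
vertices are pairs `⟨i, j⟩` with `j : Fin (n i)`, and two vertices are adjacent
iff they lie in the same component and are consecutive on that path. -/
def pathsUnion (p : ℕ) (n : Fin p → ℕ) : SimpleGraph (Σ i : Fin p, Fin (n i)) where
  Adj a b := a.1 = b.1 ∧ ((a.2 : ℕ) + 1 = (b.2 : ℕ) ∨ (b.2 : ℕ) + 1 = (a.2 : ℕ))
  symm := ⟨by rintro a b ⟨h1, h2⟩; exact ⟨h1.symm, h2.symm⟩⟩
  loopless := ⟨by rintro a ⟨-, h | h⟩ <;> omega⟩

open Finset

theorem burningNumber_le_of_radius {V : Type*} {G : SimpleGraph V} {k : ℕ} (ρ : V → ℕ)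
    (hρ : ∀ v, ρ v < k) (hball : ∀ v, ∃ x, ∀ w, ρ w = ρ v → w ∈ ball G x (ρ v)) :
    burningNumber G ≤ k := by
  rcases isEmpty_or_nonempty V with _ | ⟨⟨v₀⟩⟩
  · refine (Nat.sInf_le ?_).trans (Nat.zero_le k)
    exact ⟨Fin.elim0, isEmptyElim⟩
  classical
  choose center hcenter using hball
  let fire : ℕ → V := fun r => if h : ∃ v, ρ v = r then center h.choose else v₀
  refine Nat.sInf_le ⟨fun i => fire (k - 1 - i), fun v => ⟨⟨k - 1 - ρ v, by have := hρ v; omega⟩, ?_⟩⟩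
  have hex : ∃ w, ρ w = ρ v := ⟨v, rfl⟩
  have hr : k - 1 - (k - 1 - ρ v) = ρ v := by have := hρ v; omega
  simp only [hr, fire, dif_pos hex]
  simpa [hex.choose_spec] using hcenter hex.choose v hex.choose_spec.symm

section pathsUnion

variable {p : ℕ} {n : Fin p → ℕ}

theorem pathsUnion_exists_walk {i : Fin p} :
    ∀ (d : ℕ) (a b : Fin (n i)), (a : ℕ) + d = b →
      ∃ w : (pathsUnion p n).Walk ⟨i, a⟩ ⟨i, b⟩, w.length = d
  | 0, a, b, h => by
    obtain rfl : a = b := Fin.ext (by simpa using h)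
    exact ⟨.nil, rfl⟩
  | d + 1, a, b, h => by
    let a' : Fin (n i) := ⟨a + 1, by omega⟩
    obtain ⟨w, hw⟩ := pathsUnion_exists_walk d a' b (by simp only [a']; omega)
    exact ⟨.cons (show (pathsUnion p n).Adj ⟨i, a⟩ ⟨i, a'⟩ from ⟨rfl, .inl rfl⟩) w, by simp [hw]⟩

theorem pathsUnion_mem_ball {i : Fin p} {a b : Fin (n i)} {r : ℕ} (h : Nat.dist a b ≤ r) :
    (⟨i, b⟩ : Σ i, Fin (n i)) ∈ ball (pathsUnion p n) ⟨i, a⟩ r := by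
  unfold Nat.dist at h
  rcases le_total (a : ℕ) b with hab | hab
  · obtain ⟨w, hw⟩ := pathsUnion_exists_walk (b - a) a b (by omega)
    exact ⟨w.reachable, (SimpleGraph.dist_le w).trans (by omega)⟩
  · obtain ⟨w, hw⟩ := pathsUnion_exists_walk (a - b) b a (by omega)
    exact ⟨w.reverse.reachable,
      (SimpleGraph.dist_le w.reverse).trans (by rw [SimpleGraph.Walk.length_reverse]; omega)⟩

end pathsUnion

noncomputable def ceilSqrt (x : ℕ) : ℕ := ⌈√(x : ℝ)⌉₊

theorem ceilSqrt_le_iff {x a : ℕ} : ceilSqrt x ≤ a ↔ x ≤ a ^ 2 := by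
  rw [ceilSqrt, Nat.ceil_le, Real.sqrt_le_left (Nat.cast_nonneg a)]
  exact_mod_cast Iff.rfl

theorem le_ceilSqrt_sq (x : ℕ) : x ≤ ceilSqrt x ^ 2 :=
  ceilSqrt_le_iff.1 le_rfl

theorem ceilSqrt_mono : Monotone ceilSqrt :=
  fun _ _ h => ceilSqrt_le_iff.2 (h.trans (le_ceilSqrt_sq _))

theorem ceilSqrt_add_sq_le (m s t : ℕ) :
    ceilSqrt (m + (ceilSqrt s + t) ^ 2) ≤ ceilSqrt (m + s) + t + 1 := by
  set a := ceilSqrt s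
  set b := ceilSqrt (m + s)
  have hb : m + s ≤ b ^ 2 := le_ceilSqrt_sq _
  have hab : a ≤ b := ceilSqrt_mono (Nat.le_add_left s m)
  -- minimality of `a`: `(a - 1)² < s` unless `a = 0`
  have ha : a ^ 2 ≤ s + 2 * a := by
    rcases Nat.eq_zero_or_pos a with h | h
    · simp [h]
    · have : ¬ s ≤ (a - 1) ^ 2 := fun hs => by have := ceilSqrt_le_iff.2 hs; omega
      have hsq : (a - 1 + 1) ^ 2 = (a - 1) ^ 2 + 2 * (a - 1) + 1 := by ring
      rw [Nat.sub_add_cancel h] at hsq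
      omega
  refine ceilSqrt_le_iff.2 ?_
  clear_value a b
  nlinarith [Nat.mul_le_mul_right t hab]

noncomputable def sqrtChain (m : ℕ → ℕ) : ℕ → ℕ
  | 0 => 0
  | j + 1 => ceilSqrt (m j + sqrtChain m j ^ 2)

theorem add_sq_le_sqrtChain_succ_sq (m : ℕ → ℕ) (j : ℕ) :
    m j + sqrtChain m j ^ 2 ≤ sqrtChain m (j + 1) ^ 2 :=
  le_ceilSqrt_sq _

theorem sqrtChain_monotone (m : ℕ → ℕ) : Monotone (sqrtChain m) :=
  monotone_nat_of_le_succ fun j =>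
    (Nat.pow_le_pow_iff_left two_ne_zero).1 <|
      (Nat.le_add_left _ _).trans (add_sq_le_sqrtChain_succ_sq m j)

theorem sqrtChain_le (m : ℕ → ℕ) :
    ∀ j, sqrtChain m j ≤ ceilSqrt (∑ i ∈ range j, m i) + (j - 1)
  | 0 => by simp [sqrtChain]
  | 1 => by simp [sqrtChain]
  | j + 2 => calc
      sqrtChain m (j + 2) ≤ ceilSqrt (m (j + 1) + (ceilSqrt (∑ i ∈ range (j + 1), m i) + j) ^ 2) :=
        ceilSqrt_mono (by gcongr; exact sqrtChain_le m (j + 1))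
      _ ≤ ceilSqrt (∑ i ∈ range (j + 2), m i) + (j + 2 - 1) := by
        rw [sum_range_succ _ (j + 1), add_comm _ (m (j + 1))]
        exact ceilSqrt_add_sq_le _ _ _

theorem sqrt_sq_sub_mem_Ico {N w u j : ℕ} (h : N + w ^ 2 ≤ u ^ 2) (hj : j < N) :
    Nat.sqrt (u ^ 2 - j - 1) ∈ Set.Ico w u :=
  ⟨Nat.le_sqrt'.2 (by omega), Nat.sqrt_lt'.2 (by omega)⟩

/-- The midpoint of the block `[u² - (r + 1)², u² - r²)`, of length `2r + 1`. -/
def blockMidpoint (u r : ℕ) : ℕ := u ^ 2 - (r + 1) ^ 2 + r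

theorem dist_min_blockMidpoint_le {u j M r : ℕ} (hj : j < u ^ 2) (hM : j ≤ M)
    (hr : Nat.sqrt (u ^ 2 - j - 1) = r) : Nat.dist (min (blockMidpoint u r) M) j ≤ r := by
  have hlo := Nat.sqrt_le' (u ^ 2 - j - 1)
  have hhi := Nat.lt_succ_sqrt' (u ^ 2 - j - 1)
  have hru : (r + 1) ^ 2 ≤ u ^ 2 := Nat.pow_le_pow_left (hr ▸ Nat.sqrt_lt'.2 (by omega)) 2
  have hsq : (r + 1) ^ 2 = r ^ 2 + 2 * r + 1 := by ring
  rw [hr, Nat.succ_eq_add_one] at hhi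
  rw [hr] at hlo
  unfold Nat.dist blockMidpoint
  omega

theorem burningNumber_pathsUnion_le {p : ℕ} {n : Fin p → ℕ} {c : ℕ → ℕ} (hc : Monotone c)
    (hstep : ∀ i : Fin p, n i + c i ^ 2 ≤ c (i + 1) ^ 2) :
    burningNumber (pathsUnion p n) ≤ c p := by
  have hmem (v : Σ i, Fin (n i)) :
      Nat.sqrt (c (v.1 + 1) ^ 2 - v.2 - 1) ∈ Set.Ico (c v.1) (c (v.1 + 1)) :=
    sqrt_sq_sub_mem_Ico (hstep v.1) v.2.isLt
  refine burningNumber_le_of_radius (fun v => Nat.sqrt (c (v.1 + 1) ^ 2 - v.2 - 1))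
    (fun v => (hmem v).2.trans_le (hc v.1.2)) ?_
  rintro ⟨i, j⟩
  dsimp only
  refine ⟨⟨i, min (blockMidpoint (c (i + 1)) (Nat.sqrt (c (i + 1) ^ 2 - j - 1))) (n i - 1),
    by have := j.2; omega⟩, ?_⟩
  rintro ⟨i', j'⟩ hr
  obtain rfl : i' = i := Fin.ext <| by_contra fun h =>
    Set.disjoint_left.1 (hc.pairwise_disjoint_on_Ico_succ h) (hmem ⟨i', j'⟩) (hr ▸ hmem ⟨i, j⟩)
  have hj' : (j' : ℕ) < c (i' + 1) ^ 2 := by have := hstep i'; omega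
  exact pathsUnion_mem_ball (dist_min_blockMidpoint_le hj' (by omega : (j' : ℕ) ≤ n i' - 1) hr)

theorem burning_pathsUnion_le_ceil_sqrt_general {p : ℕ} (n : Fin p → ℕ) :
    burningNumber (pathsUnion p n) ≤ ⌈Real.sqrt (∑ i, n i : ℕ)⌉₊ + (p - 1) := by
  let m : ℕ → ℕ := fun j => if h : j < p then n ⟨j, h⟩ else 0
  have hsum : ∑ i, n i = ∑ j ∈ range p, m j := by
    rw [← Fin.sum_univ_eq_sum_range]
    simp [m]
  calc burningNumber (pathsUnion p n)
      ≤ sqrtChain m p := burningNumber_pathsUnion_le (sqrtChain_monotone m)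
        fun i => by simpa [m] using add_sq_le_sqrtChain_succ_sq m i
    _ ≤ ceilSqrt (∑ i, n i) + (p - 1) := hsum ▸ sqrtChain_le m p

/-- Roshanbin: a forest of order `n` that is the disjoint union of `p` paths has
burning number at most `⌈√n⌉ + (p - 1)`. -/
theorem burning_pathsUnion_le_ceil_sqrt {p : ℕ} (hp : 1 ≤ p) (n : Fin p → ℕ)
    (hn : ∀ i, 1 ≤ n i) :
    burningNumber (pathsUnion p n) ≤ ⌈Real.sqrt (∑ i, n i : ℕ)⌉₊ + (p - 1) :=
  burning_pathsUnion_le_ceil_sqrt_general n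
end

section
/- If T is a finite tree of order n that has exactly n_{≥3} vertices of degree at least 3, then b(T) ≤ ⌈√n⌉ + n_{≥3}. -/
open Finset

section BallCover

variable {ι : Type*} {k K : ℕ} {s : Finset ι} {b : ι → ℕ} {g : ℕ → ι × ℕ}

/-- `g r = (i, c)` places the ball of radius `r` at position `c` of the interval `[0, b i)`. -/
def IsBallCover (k : ℕ) (s : Finset ι) (b : ι → ℕ) (g : ℕ → ι × ℕ) : Prop :=
  ∀ i ∈ s, ∀ p < b i, ∃ r < k, (g r).1 = i ∧ (g r).2 ≤ p + r ∧ p ≤ (g r).2 + r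

lemma IsBallCover.of_shorten [DecidableEq ι] {i : ι}
    (hg : IsBallCover K s (Function.update b i (b i - (2 * K + 1))) g) (hi : 2 * K + 1 ≤ b i) :
    IsBallCover (K + 1) s b (Function.update g K (i, b i - (K + 1))) := by
  intro j hj p hp
  by_cases hfar : j = i ∧ b i - (2 * K + 1) ≤ p
  · obtain ⟨rfl, hp'⟩ := hfar
    exact ⟨K, by omega, by simp, by simp only [Function.update_self, tsub_le_iff_right]; omega,
      by simp only [Function.update_self]; omega⟩
  · have hp' : p < Function.update b i (b i - (2 * K + 1)) j := by
      rcases eq_or_ne j i with rfl | hji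
      · simp only [Function.update_self]
        exact lt_of_not_ge fun h => hfar ⟨rfl, h⟩
      · simpa [Function.update_of_ne hji] using hp
    obtain ⟨r, hr, h⟩ := hg j hj p hp'
    exact ⟨r, by omega, by simpa [Function.update_of_ne hr.ne] using h⟩

lemma IsBallCover.of_erase [DecidableEq ι] {i : ι} (hg : IsBallCover K (s.erase i) b g)
    (hi : b i ≤ 2 * K + 1) : IsBallCover (K + 1) s b (Function.update g K (i, K)) := by
  intro j hj p hp
  rcases eq_or_ne j i with rfl | hji
  · exact ⟨K, by omega, by simp, by simp, by simp only [Function.update_self]; omega⟩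
  · obtain ⟨r, hr, h⟩ := hg j (mem_erase.2 ⟨hji, hj⟩) p hp
    exact ⟨r, by omega, by simpa [Function.update_of_ne hr.ne] using h⟩

lemma exists_isBallCover_of_add_card_le [Nonempty ι] (h : ∀ i ∈ s, b i + #s ≤ k) :
    ∃ g, IsBallCover k s b g := by
  classical
  refine ⟨fun r => (if hr : k - 1 - r < #s then s.equivFin.symm ⟨k - 1 - r, hr⟩
    else Classical.arbitrary ι, 0), fun i hi p hp => ?_⟩
  set j := (s.equivFin ⟨i, hi⟩ : ℕ) with hj
  have hjs : j < #s := (s.equivFin ⟨i, hi⟩).2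
  have := h i hi
  refine ⟨k - 1 - j, by omega, ?_, by simp, by simp only [zero_add]; omega⟩
  simp only [show k - 1 - (k - 1 - j) = j by omega, dif_pos hjs]
  simp [hj]

/-- Induction on `k`: a long interval gives up `2k - 1` points to the ball of radius `k - 1`;
failing that, an interval with `b i + #s > k` is swallowed by that ball, the budget `(#s - 1) k`
paying for it; otherwise all intervals are short enough for one ball each. -/
theorem exists_isBallCover [Nonempty ι] (h : ∑ i ∈ s, b i + (#s - 1) * k ≤ k * k) :
    ∃ g, IsBallCover k s b g := by
  classical
  induction k generalizing s b with
  | zero =>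
    refine ⟨fun _ => Classical.arbitrary _, fun i hi p hp => ?_⟩
    have := (sum_eq_zero_iff.1 (by omega : ∑ i ∈ s, b i = 0)) i hi
    omega
  | succ K ih =>
    by_cases hlong : ∃ i ∈ s, 2 * K + 1 ≤ b i
    · obtain ⟨i, hi, hbi⟩ := hlong
      have hsum : ∑ j ∈ s, Function.update b i (b i - (2 * K + 1)) j + 2 * K + 1 =
          ∑ j ∈ s, b j := by
        rw [sum_update_of_mem hi, ← add_sum_erase s b hi, sdiff_singleton_eq_erase]
        omega
      have hs : 1 ≤ #s := card_pos.2 ⟨i, hi⟩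
      obtain ⟨g, hg⟩ := ih (s := s) (b := Function.update b i (b i - (2 * K + 1))) (by
        have : (#s - 1) * (K + 1) = (#s - 1) * K + (#s - 1) := by ring
        nlinarith)
      exact ⟨_, hg.of_shorten hbi⟩
    push Not at hlong
    by_cases hbig : ∃ i ∈ s, K + 2 ≤ b i + #s
    · obtain ⟨i, hi, hbi⟩ := hbig
      have hsum := add_sum_erase s b hi
      have hcard := card_erase_of_mem hi
      obtain ⟨g, hg⟩ := ih (s := s.erase i) (b := b) (by
        rcases Nat.lt_or_ge #s 2 with hs | hs
        · have : s.erase i = ∅ := card_eq_zero.1 (by omega)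
          simp [this]
        · obtain ⟨t, ht⟩ : ∃ t, #s = t + 2 := ⟨#s - 2, by omega⟩
          rw [hcard, ht, show t + 2 - 1 - 1 = t by omega]
          rw [ht, show t + 2 - 1 = t + 1 by omega] at h
          rw [ht] at hbi
          nlinarith)
      exact ⟨_, hg.of_erase (by have := hlong i hi; omega)⟩
    · push Not at hbig
      exact exists_isBallCover_of_add_card_le fun i hi => by have := hbig i hi; omega

end BallCover

namespace SimpleGraph

variable {V : Type*} {G : SimpleGraph V}

lemma Walk.dist_getVert_le_of_le_add {u v : V} (q : G.Walk u v) {i j r : ℕ}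
    (hij : i ≤ j + r) (hji : j ≤ i + r) : G.dist (q.getVert i) (q.getVert j) ≤ r := by
  wlog h : i ≤ j generalizing i j
  · rw [dist_comm]; exact this hji hij (by omega)
  have hdist := dist_le ((q.drop i).take (j - i))
  rw [Walk.take_length, Walk.drop_getVert, Nat.add_sub_cancel' h] at hdist
  omega

lemma three_le_degree_of_adj {v a b c : V} [Fintype (G.neighborSet v)]
    (ha : G.Adj v a) (hb : G.Adj v b) (hc : G.Adj v c)
    (hab : a ≠ b) (hac : a ≠ c) (hbc : b ≠ c) : 3 ≤ G.degree v := by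
  classical
  rw [← card_neighborFinset_eq_degree, ← card_eq_three.2 ⟨a, b, c, hab, hac, hbc, rfl⟩]
  exact card_le_card (by simp [insert_subset_iff, ha, hb, hc])

lemma degree_induce_le {s : Set V} (v : s) [Fintype ((G.induce s).neighborSet v)]
    [Fintype (G.neighborSet v)] : (G.induce s).degree v ≤ G.degree v := by
  simp only [← card_neighborFinset_eq_degree]
  exact card_le_card_of_injOn Subtype.val (fun w hw => by simpa using hw)
    Subtype.val_injective.injOn

lemma Walk.IsPath.three_le_degree_of_adj {u v a x : V} [Fintype (G.neighborSet a)]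
    {p : G.Walk u v} (hp : p.IsPath) (ha : a ∈ p.support) (hau : a ≠ u) (hav : a ≠ v)
    (hx : x ∉ p.support) (hax : G.Adj a x) : 3 ≤ G.degree a := by
  obtain ⟨n, rfl, hn⟩ := Walk.mem_support_iff_exists_getVert.1 ha
  obtain ⟨m, rfl⟩ : ∃ m, n = m + 1 := Nat.exists_eq_succ_of_ne_zero (by rintro rfl; simp at hau)
  have hlen : m + 1 < p.length :=
    lt_of_le_of_ne hn fun h => hav (by rw [h, Walk.getVert_length])
  have hne : p.getVert m ≠ p.getVert (m + 2) := fun h => by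
    have := hp.getVert_injOn (by simp only [Set.mem_ofPred_eq]; omega)
      (by simp only [Set.mem_ofPred_eq]; omega) h
    omega
  exact SimpleGraph.three_le_degree_of_adj (p.adj_getVert_succ (by omega)).symm
    (p.adj_getVert_succ hlen) hax hne
    (fun h => hx (h ▸ p.getVert_mem_support m)) (fun h => hx (h ▸ p.getVert_mem_support _))

/-- A longest path starting in `C` cannot be extended at either end, and a vertex of `C` off the
path would give an interior vertex of the path a third neighbour. -/
theorem ConnectedComponent.exists_isPath_forall_mem_support_iff [Fintype V]
    [DecidableRel G.Adj] (hdeg : ∀ v, G.degree v ≤ 2) (C : G.ConnectedComponent) :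
    ∃ (u v : V) (p : G.Walk u v), p.IsPath ∧ ∀ w, w ∈ p.support ↔ G.connectedComponentMk w = C := by
  classical
  let P n := ∃ (u v : V) (p : G.Walk u v), p.IsPath ∧ G.connectedComponentMk u = C ∧ p.length = n
  have hP0 : P 0 := by
    obtain ⟨u, rfl⟩ := C.exists_rep
    exact ⟨u, u, .nil, .nil, rfl, rfl⟩
  obtain ⟨u, v, p, hp, hu, hlen⟩ := Nat.findGreatest_spec (Nat.zero_le (Fintype.card V)) hP0
  have hmax : ∀ n, P n → n ≤ p.length := fun n hn => by
    obtain ⟨_, _, q, hq, hqC, rfl⟩ := hn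
    exact hlen ▸ Nat.le_findGreatest hq.length_lt.le ⟨_, _, q, hq, hqC, rfl⟩
  have hsupp : ∀ w ∈ p.support, G.connectedComponentMk w = C := fun w hw =>
    hu ▸ (ConnectedComponent.sound (p.takeUntil w hw).reachable).symm
  refine ⟨u, v, p, hp, fun w => ⟨hsupp w, fun hw => ?_⟩⟩
  by_contra hwp
  obtain ⟨q⟩ := ConnectedComponent.exact (hu.trans hw.symm)
  obtain ⟨d, -, hd₁, hd₂⟩ := q.exists_boundary_dart {x | x ∈ p.support} p.start_mem_support hwp
  have hdC : G.connectedComponentMk d.snd = C :=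
    (ConnectedComponent.connectedComponentMk_eq_of_adj d.adj).symm.trans (hsupp _ hd₁)
  by_cases hdu : d.fst = u
  · have := hmax _ ⟨_, _, .cons (hdu ▸ d.adj.symm) p, hp.cons hd₂, hdC, rfl⟩
    simp at this
  by_cases hdv : d.fst = v
  · have := hmax _ ⟨_, _, .cons (hdv ▸ d.adj.symm) p.reverse, hp.reverse.cons (by simpa using hd₂),
      hdC, rfl⟩
    simp at this
  exact (hdeg _).not_gt (hp.three_le_degree_of_adj hd₁ hdu hdv hd₂ d.adj)

theorem exists_centers_of_degree_le_two [Fintype V] [DecidableRel G.Adj] [Nonempty V]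
    {D : Set V} (hD : ∀ v ∈ D, G.degree v ≤ 2) {k : ℕ}
    (h : Nat.card D + (Nat.card (G.induce D).ConnectedComponent - 1) * k ≤ k * k) :
    ∃ y : ℕ → V, ∀ v ∈ D, ∃ r < k, G.dist (y r) v ≤ r := by
  classical
  rcases isEmpty_or_nonempty (G.induce D).ConnectedComponent with hC | hC
  · exact ⟨fun _ => Classical.arbitrary V,
      fun v hv => (IsEmpty.false ((G.induce D).connectedComponentMk ⟨v, hv⟩)).elim⟩
  choose u w p hp hsupp using fun C : (G.induce D).ConnectedComponent =>
    C.exists_isPath_forall_mem_support_iff fun v => (degree_induce_le v).trans (hD v v.2)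
  have hsum : ∑ C, ((p C).length + 1) = Nat.card D := by
    rw [Nat.card_eq_fintype_card, ← card_univ,
      card_eq_sum_card_fiberwise (f := (G.induce D).connectedComponentMk) (t := univ) (by simp)]
    refine sum_congr rfl fun C _ => ?_
    rw [← Walk.length_support, ← List.toFinset_card_of_nodup (hp C).support_nodup]
    congr 1
    ext x
    simp [hsupp]
  obtain ⟨g, hg⟩ := exists_isBallCover (s := univ) (b := fun C => (p C).length + 1) (k := k)
    (by rw [hsum, card_univ, ← Nat.card_eq_fintype_card]; exact h)
  refine ⟨fun r => ((p (g r).1).getVert (g r).2 : V), fun v hv => ?_⟩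
  set C := (G.induce D).connectedComponentMk ⟨v, hv⟩
  obtain ⟨i, hi, hil⟩ := Walk.mem_support_iff_exists_getVert.1 ((hsupp C ⟨v, hv⟩).2 rfl)
  obtain ⟨r, hr, hrC, h1, h2⟩ := hg C (mem_univ _) i (Nat.lt_succ_of_le hil)
  refine ⟨r, hr, ?_⟩
  have := ((p C).map (Embedding.induce D).toHom).dist_getVert_le_of_le_add h1 h2
  rw [Walk.getVert_map, Walk.getVert_map, hi] at this
  show G.dist ((p (g r).1).getVert (g r).2 : V) v ≤ r
  rw [hrC]
  exact this

section Levels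

variable {S : Finset V} {k : ℕ} {u v : V}

/-- The distance from `v` to the nearest vertex of `S`; it is `0` when `S = ∅`. -/
noncomputable def infDist (G : SimpleGraph V) (S : Finset V) (v : V) : ℕ :=
  sInf (G.dist v '' S)

def farSet (G : SimpleGraph V) (S : Finset V) (k : ℕ) : Set V :=
  {v | ∀ u ∈ S, k < G.dist v u}

lemma infDist_le_dist (hu : u ∈ S) : G.infDist S v ≤ G.dist v u :=
  Nat.sInf_le ⟨u, hu, rfl⟩

lemma exists_dist_eq_infDist (hS : S.Nonempty) (v : V) : ∃ u ∈ S, G.dist v u = G.infDist S v :=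
  Nat.sInf_mem ((coe_nonempty.2 hS).image _)

lemma infDist_eq_zero_of_mem (hv : v ∈ S) : G.infDist S v = 0 :=
  Nat.eq_zero_of_le_zero (dist_self (G := G) (v := v) ▸ infDist_le_dist hv)

lemma infDist_eq_zero_iff (hG : G.Connected) (hS : S.Nonempty) : G.infDist S v = 0 ↔ v ∈ S := by
  refine ⟨fun h => ?_, infDist_eq_zero_of_mem⟩
  obtain ⟨u, hu, huv⟩ := exists_dist_eq_infDist (G := G) hS v
  rwa [(hG.dist_eq_zero_iff).1 (huv.trans h)]

lemma mem_farSet_iff (hS : S.Nonempty) : v ∈ G.farSet S k ↔ k < G.infDist S v := by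
  refine ⟨fun h => ?_, fun h u hu => h.trans_le (infDist_le_dist hu)⟩
  obtain ⟨u, hu, huv⟩ := exists_dist_eq_infDist (G := G) hS v
  exact huv ▸ h u hu

/-- The witness is the second vertex of a shortest path from `v` to `S`. -/
lemma exists_adj_infDist_add_one (hG : G.Connected) (hv : 0 < G.infDist S v) :
    ∃ w, G.Adj v w ∧ G.infDist S w + 1 = G.infDist S v := by
  have hS : S.Nonempty := nonempty_iff_ne_empty.2 fun h => by simp [h, infDist] at hv
  obtain ⟨u, hu, huv⟩ := exists_dist_eq_infDist (G := G) hS v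
  obtain ⟨p, hp⟩ := hG.exists_walk_length_eq_dist v u
  have hnil : ¬p.Nil := fun h => by simp only [Walk.length_eq_zero_iff.2 h] at hp; omega
  refine ⟨p.snd, p.adj_snd hnil, le_antisymm ?_ ?_⟩
  · have := (infDist_le_dist (G := G) (v := p.snd) hu).trans (dist_le p.tail)
    have := p.length_tail_add_one hnil
    omega
  · obtain ⟨u', hu', hu'w⟩ := exists_dist_eq_infDist (G := G) hS p.snd
    have := (infDist_le_dist (G := G) (v := v) hu').trans (hG.dist_triangle (v := p.snd))
    rw [dist_eq_one_iff_adj.2 (p.adj_snd hnil)] at this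
    omega

variable [Fintype V]

/-- Sending each vertex at distance `ℓ + 1` from `S` to a neighbour one step closer is injective:
otherwise that neighbour would have two neighbours farther from `S` and one closer. -/
lemma card_infDist_succ_le [DecidableRel G.Adj] (hG : G.Connected)
    (hdeg : ∀ v, 3 ≤ G.degree v → v ∈ S) {ℓ : ℕ} (hℓ : 1 ≤ ℓ) :
    #{v | G.infDist S v = ℓ + 1} ≤ #{v | G.infDist S v = ℓ} := by
  have hparent : ∀ v, ∃ w, 0 < G.infDist S v → G.Adj v w ∧ G.infDist S w + 1 = G.infDist S v :=
    fun v => (em (0 < G.infDist S v)).elim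
      (fun h => (exists_adj_infDist_add_one hG h).imp fun _ hw _ => hw) fun h => ⟨v, (h ·|>.elim)⟩
  choose f hf using hparent
  refine card_le_card_of_injOn f (fun v hv => ?_) fun a ha b hb hab => ?_
  · simp only [coe_filter, mem_univ, true_and, Set.mem_ofPred_eq] at hv ⊢
    have := (hf v (by omega)).2
    omega
  simp only [coe_filter, mem_univ, true_and, Set.mem_ofPred_eq] at ha hb
  obtain ⟨haf, hla⟩ := hf a (by omega)
  obtain ⟨hbf, hlb⟩ := hf b (by omega)
  obtain ⟨hff, hlf⟩ := hf (f a) (by omega)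
  by_contra hab'
  have h3 := three_le_degree_of_adj haf.symm (hab ▸ hbf.symm) hff hab'
    (fun h => by rw [← h] at hlf; omega) (fun h => by rw [← h] at hlf; omega)
  have := infDist_eq_zero_of_mem (G := G) (hdeg _ h3)
  omega

/-- Descending towards `S` from a far vertex reaches distance exactly `k + 1` without leaving the
far set, so every component of the far set meets that level. -/
lemma card_connectedComponent_farSet_le (hG : G.Connected) (hS : S.Nonempty) (k : ℕ) :
    Nat.card (G.induce (G.farSet S k)).ConnectedComponent ≤ #{v | G.infDist S v = k + 1} := by
  classical
  have hreach : ∀ n (w : G.farSet S k), G.infDist S w = k + 1 + n →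
      ∃ u : G.farSet S k, G.infDist S u = k + 1 ∧ (G.induce (G.farSet S k)).Reachable u w := by
    intro n
    induction n with
    | zero => exact fun w hw => ⟨w, hw, .rfl⟩
    | succ n ih =>
      intro w hw
      obtain ⟨w', hadj, hw'⟩ := exists_adj_infDist_add_one hG (by omega : 0 < G.infDist S w)
      obtain ⟨u, hu, hr⟩ := ih ⟨w', (mem_farSet_iff hS).2 (by omega)⟩ (by dsimp only; omega)
      exact ⟨u, hu, hr.trans (Adj.reachable (G := G.induce _) hadj.symm)⟩
  let f : {v // G.infDist S v = k + 1} → (G.induce (G.farSet S k)).ConnectedComponent :=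
    fun v => (G.induce _).connectedComponentMk ⟨v, (mem_farSet_iff hS).2 (by omega)⟩
  have hf : Function.Surjective f := by
    intro C
    induction C using ConnectedComponent.ind with | h w =>
    have := (mem_farSet_iff hS).1 w.2
    obtain ⟨u, hu, hr⟩ := hreach (G.infDist S w - (k + 1)) w (by omega)
    exact ⟨⟨u, hu⟩, ConnectedComponent.sound hr⟩
  calc Nat.card _ ≤ Nat.card {v // G.infDist S v = k + 1} := Nat.card_le_card_of_surjective f hf
    _ = _ := by rw [Nat.card_eq_fintype_card, Fintype.card_subtype]

/-- `V` splits into `S`, the levels `1, …, k` around `S`, and the far set; each of these levels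
has at least as many vertices as the far set has components. -/
theorem card_add_mul_add_card_farSet_le [DecidableRel G.Adj] (hG : G.Connected)
    (hS : S.Nonempty) (hdeg : ∀ v, 3 ≤ G.degree v → v ∈ S) (k : ℕ) :
    #S + Nat.card (G.induce (G.farSet S k)).ConnectedComponent * k + Nat.card (G.farSet S k)
      ≤ Fintype.card V := by
  classical
  set lev := G.infDist S
  have hfib := card_eq_sum_card_fiberwise (s := univ) (t := range (k + 2))
    (f := fun v => min (lev v) (k + 1))
    (fun v _ => mem_range.2 (Nat.lt_succ_of_le (min_le_right _ _)))
  rw [sum_range_succ, sum_range_succ'] at hfib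
  have h0 : #{v | min (lev v) (k + 1) = 0} = #S := by
    congr 1
    ext v
    simp [← infDist_eq_zero_iff hG hS, lev]
  have hfar : #{v | min (lev v) (k + 1) = k + 1} = Nat.card (G.farSet S k) := by
    rw [Nat.card_eq_fintype_card, ← Set.toFinset_card]
    congr 1
    ext v
    simp [mem_farSet_iff hS, lev]
  have hlevels : ∀ i ∈ range k,
      Nat.card (G.induce (G.farSet S k)).ConnectedComponent ≤
        #{v | min (lev v) (k + 1) = i + 1} := by
    intro i hi
    have hanti : AntitoneOn (fun ℓ => #{v | lev v = ℓ}) (Set.Ici 1) :=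
      antitoneOn_nat_Ici_of_succ_le fun ℓ hℓ => card_infDist_succ_le hG hdeg hℓ
    have hi := mem_range.1 hi
    have hlevel : #{v | lev v = i + 1} = #{v | min (lev v) (k + 1) = i + 1} :=
      congrArg card (filter_congr fun v _ => by omega)
    exact (card_connectedComponent_farSet_le hG hS k).trans
      ((hanti (a := i + 1) (b := k + 1) (by simp) (by simp) (by omega)).trans hlevel.le)
  have := sum_le_sum hlevels
  rw [sum_const, card_range, smul_eq_mul] at this
  simp only [card_univ] at hfib
  rw [mul_comm] at this
  omega

lemma card_connectedComponent_farSet_empty_le_one (hG : G.Preconnected) (k : ℕ) :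
    Nat.card (G.induce (G.farSet ∅ k)).ConnectedComponent ≤ 1 := by
  have : G.farSet ∅ k = Set.univ := by ext; simp [farSet]
  rw [this, Nat.card_congr (induceUnivIso G).connectedComponentEquiv]
  have := hG.subsingleton_connectedComponent
  exact Finite.card_le_one_iff_subsingleton.2 this

theorem card_farSet_add_le [DecidableRel G.Adj] (hG : G.Connected)
    (hdeg : ∀ v, 3 ≤ G.degree v → v ∈ S) (hk : Fintype.card V ≤ k * k) :
    Nat.card (G.farSet S k) + (Nat.card (G.induce (G.farSet S k)).ConnectedComponent - 1) * k
      ≤ k * k := by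
  have hD : Nat.card (G.farSet S k) ≤ Fintype.card V :=
    (Finite.card_subtype_le _).trans_eq Nat.card_eq_fintype_card
  rcases S.eq_empty_or_nonempty with rfl | hS
  · have := card_connectedComponent_farSet_empty_le_one hG.preconnected k
    rw [Nat.sub_eq_zero_of_le this, zero_mul]
    omega
  · have := card_add_mul_add_card_farSet_le hG hS hdeg k
    have := hS.card_pos
    have := Nat.mul_le_mul_right k
      (Nat.sub_le (Nat.card (G.induce (G.farSet S k)).ConnectedComponent) 1)
    omega

end Levels

end SimpleGraph

open SimpleGraph

/-- The sources are the vertices of `A`, whose balls have radius at least `k`, followed by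
`y (k - 1), …, y 0`. -/
lemma burningNumber_le_card_add {V : Type*} {G : SimpleGraph V} (hG : G.Preconnected)
    (A : Finset V) (k : ℕ) (y : ℕ → V)
    (hcover : ∀ v, (∃ a ∈ A, G.dist a v ≤ k) ∨ ∃ r < k, G.dist (y r) v ≤ r) :
    burningNumber G ≤ #A + k := by
  refine Nat.sInf_le
    ⟨Fin.append (fun j => (A.equivFin.symm j : V)) (fun j : Fin k => y (k - 1 - j)), fun v => ?_⟩
  rcases hcover v with ⟨a, ha, hav⟩ | ⟨r, hr, hrv⟩
  · refine ⟨Fin.castAdd k (A.equivFin ⟨a, ha⟩), hG _ v, ?_⟩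
    simp only [Fin.append_left, Equiv.symm_apply_apply, Fin.val_castAdd]
    have := (A.equivFin ⟨a, ha⟩).2
    omega
  · refine ⟨Fin.natAdd #A ⟨k - 1 - r, by omega⟩, hG _ v, ?_⟩
    simp only [Fin.append_right, Fin.val_natAdd, show k - 1 - (k - 1 - r) = r by omega]
    omega

lemma le_ceil_sqrt_mul_self (n : ℕ) : n ≤ ⌈√(n : ℝ)⌉₊ * ⌈√(n : ℝ)⌉₊ := by
  have h : (n : ℝ) ≤ ⌈√(n : ℝ)⌉₊ * ⌈√(n : ℝ)⌉₊ :=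
    calc (n : ℝ) = √n * √n := (Real.mul_self_sqrt n.cast_nonneg).symm
      _ ≤ _ := mul_self_le_mul_self (Real.sqrt_nonneg _) (Nat.le_ceil _)
  exact_mod_cast h

theorem burning_tree_le_ceil_sqrt_add_high_degree {V : Type*} [Fintype V]
    (T : SimpleGraph V) [DecidableRel T.Adj] (hT : T.IsTree) (n3 : ℕ)
    (hn3 : {v : V | 3 ≤ T.degree v}.ncard = n3) :
    burningNumber T ≤ ⌈Real.sqrt (Fintype.card V)⌉₊ + n3 := by
  have hG := hT.connected
  have := hG.nonempty
  set k := ⌈Real.sqrt (Fintype.card V)⌉₊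
  set S : Finset V := {v | 3 ≤ T.degree v}
  have hS : #S = n3 := by rw [← hn3, ← Set.ncard_coe_finset]; simp [S]
  have hdeg : ∀ v, 3 ≤ T.degree v → v ∈ S := by simp [S]
  obtain ⟨y, hy⟩ := exists_centers_of_degree_le_two
    (fun v hv => not_lt.1 fun h => by simpa using hv v (hdeg v h))
    (card_farSet_add_le hG hdeg (le_ceil_sqrt_mul_self _))
  refine (burningNumber_le_card_add hG.preconnected S k y fun v => ?_).trans (by omega)
  by_cases hv : v ∈ T.farSet S k
  · exact .inr (hy v hv)
  · exact .inl (by simpa [farSet, dist_comm] using hv)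
end

section
/- If T is a finite tree of order n that has exactly n_2 vertices of degree 2, then b(T) ≤ ⌈√((n + n_2) + 1/4) + 1/2⌉. -/
/-!
Burn the deepest part of the tree first. Root the tree at `r` and let `ℓ` be a vertex farthest
from `r`. If `dist r ℓ < k`, a single fire lit at `r` burns everything within `k` rounds.
Otherwise let `x` be the ancestor of `ℓ` at distance `k - 1` from it: the subtree `D` hanging
from `x` lies within distance `k - 1` of `x`, so lighting `x` first burns it. Let `A` be the set
of vertices of degree two. Each step up the path from `ℓ` to `x` adds to `D` a new vertex, which
either lies in `A` or, having degree at least three, brings along one more child; hence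
`|D| + |D ∩ A| ≥ 2k - 1`. Removing `D` leaves a tree in which only the parent of `x` can have
gained degree two, so `n + n₂` drops by at least `2k - 2`, taking `k (k - 1)` down to
`(k - 1) (k - 2)`. By induction on `k`, a burning sequence of length `k` exists whenever
`n + n₂ ≤ k (k - 1)`, and `⌈√(n + n₂ + 1/4) + 1/2⌉` is the least such `k`.
-/

namespace SimpleGraph

variable {V : Type*} {G : SimpleGraph V}

theorem Hom.dist_le {W : Type*} {H : SimpleGraph W} (f : G →g H) {u v : V}
    (h : G.Reachable u v) : H.dist (f u) (f v) ≤ G.dist u v := by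
  obtain ⟨p, hp⟩ := h.exists_walk_length_eq_dist
  simpa [hp] using H.dist_le (p.map f)

theorem Connected.exists_adj_dist_add_one_eq (hG : G.Connected) {r v : V} (hv : v ≠ r) :
    ∃ w, G.Adj w v ∧ G.dist r w + 1 = G.dist r v := by
  obtain ⟨p, hp⟩ := hG.exists_walk_length_eq_dist v r
  cases p with
  | nil => exact absurd rfl hv
  | @cons _ w _ h q =>
    refine ⟨w, h.symm, le_antisymm ?_ ?_⟩
    · rw [dist_comm, G.dist_comm (u := r), ← hp, Walk.length_cons]
      exact Nat.add_le_add_right (G.dist_le q) 1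
    · simpa [dist_eq_one_iff_adj.mpr h.symm] using hG.dist_triangle (u := r) (v := w) (w := v)

theorem Connected.exists_dist_eq_and_dist_eq (hG : G.Connected) {u v : V} {a b : ℕ}
    (h : G.dist u v = a + b) : ∃ x, G.dist u x = a ∧ G.dist x v = b := by
  induction b generalizing v with
  | zero => exact ⟨v, h, dist_self⟩
  | succ b ih =>
    have hv : v ≠ u := by rintro rfl; simp at h
    obtain ⟨w, hwv, hw⟩ := hG.exists_adj_dist_add_one_eq hv
    obtain ⟨x, hux, hxw⟩ := ih (v := w) (by omega)
    have hxv := hG.dist_triangle (u := x) (v := w) (w := v)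
    have huv := hG.dist_triangle (u := u) (v := x) (w := v)
    rw [dist_eq_one_iff_adj.mpr hwv] at hxv
    exact ⟨x, hux, by omega⟩

theorem IsTree.eq_of_adj_of_dist_add_one_eq (hG : G.IsTree) {r u u' w : V} (hu : G.Adj u w)
    (hu' : G.Adj u' w) (h : G.dist r u + 1 = G.dist r w) (h' : G.dist r u' + 1 = G.dist r w) :
    u = u' := by
  obtain ⟨p, hp⟩ := (hG.connected r u).exists_walk_length_eq_dist
  obtain ⟨p', hp'⟩ := (hG.connected r u').exists_walk_length_eq_dist
  have hpath := (p.concat hu).isPath_of_length_eq_dist (by simp [hp, h])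
  have hpath' := (p'.concat hu').isPath_of_length_eq_dist (by simp [hp', h'])
  obtain ⟨huu', -⟩ := Walk.concat_inj ((hG.existsUnique_path r w).unique hpath hpath')
  exact huu'

theorem exists_adj_ne_ne_of_degree_ne_two {v a b : V} [Fintype (G.neighborSet v)]
    (ha : G.Adj v a) (hb : G.Adj v b) (hab : a ≠ b) (hv : G.degree v ≠ 2) :
    ∃ w, G.Adj v w ∧ w ≠ a ∧ w ≠ b := by
  classical
  have hsub : {a, b} ⊆ G.neighborFinset v := by simp [Finset.insert_subset_iff, ha, hb]
  have hle := Finset.card_le_card hsub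
  rw [Finset.card_pair hab, card_neighborFinset_eq_degree] at hle
  obtain ⟨w, hw, hw'⟩ := Finset.exists_mem_notMem_of_card_lt_card (s := {a, b})
    (t := G.neighborFinset v) (by rw [Finset.card_pair hab, card_neighborFinset_eq_degree]; omega)
  simp only [Finset.mem_insert, Finset.mem_singleton, not_or, mem_neighborFinset] at hw hw'
  exact ⟨w, hw, hw'⟩

theorem ncard_degree_induce_eq_two_le [Fintype V] [DecidableRel G.Adj] {s : Set V}
    [DecidablePred (· ∈ s)] (y : V) (hs : ∀ z ∈ s, z ≠ y → G.neighborSet z ⊆ s) :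
    {z : s | (G.induce s).degree z = 2}.ncard ≤ ({v | G.degree v = 2} ∩ s).ncard + 1 := by
  calc {z : s | (G.induce s).degree z = 2}.ncard
      = (Subtype.val '' {z : s | (G.induce s).degree z = 2}).ncard :=
        (Set.ncard_image_of_injective _ Subtype.val_injective).symm
    _ ≤ (insert y ({v | G.degree v = 2} ∩ s)).ncard := Set.ncard_le_ncard ?_
    _ ≤ _ := Set.ncard_insert_le _ _
  rintro _ ⟨z, hz, rfl⟩
  by_cases hzy : (z : V) = y
  · exact .inl hzy
  · refine .inr ⟨?_, z.2⟩
    rwa [Set.mem_ofPred_eq, ← degree_induce_of_neighborSet_subset (hs z z.2 hzy)]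

/-- Rooting `G` at `r`, the vertices `v` having a geodesic from `r` through `x`;
in a tree, the subtree hanging from `x`. -/
def descendants (G : SimpleGraph V) (r x : V) : Set V :=
  {v | G.dist r v = G.dist r x + G.dist x v}

theorem mem_descendants_self (r x : V) : x ∈ G.descendants r x := by
  simp [descendants]

theorem Connected.mem_descendants_of_adj (hG : G.Connected) {r x u w : V}
    (hu : u ∈ G.descendants r x) (hadj : G.Adj u w) (hw : G.dist r w = G.dist r u + 1) :
    w ∈ G.descendants r x := by
  have hrw := hG.dist_triangle (u := r) (v := x) (w := w)
  have hxw := hG.dist_triangle (u := x) (v := u) (w := w)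
  rw [dist_eq_one_iff_adj.mpr hadj] at hxw
  simp only [descendants, Set.mem_ofPred_eq] at hu ⊢
  omega

theorem Connected.descendants_subset_of_mem (hG : G.Connected) {r x u : V}
    (hu : u ∈ G.descendants r x) : G.descendants r u ⊆ G.descendants r x := by
  intro v hv
  have hxv := hG.dist_triangle (u := x) (v := u) (w := v)
  have hrv := hG.dist_triangle (u := r) (v := x) (w := v)
  simp only [descendants, Set.mem_ofPred_eq] at hu hv ⊢
  omega

theorem Connected.root_notMem_descendants (hG : G.Connected) {r x : V} (hx : x ≠ r) :
    r ∉ G.descendants r x := by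
  have hrx : G.dist r x ≠ 0 := hG.dist_eq_zero_iff.not.mpr hx.symm
  simp only [descendants, Set.mem_ofPred_eq, dist_self]
  omega

theorem Connected.induce_compl_descendants (hG : G.Connected) {r x : V} (hx : x ≠ r) :
    (G.induce (G.descendants r x)ᶜ).Connected := by
  have hr := hG.root_notMem_descendants hx
  suffices h : ∀ n v (hv : v ∉ G.descendants r x), G.dist r v = n →
      (G.induce (G.descendants r x)ᶜ).Reachable ⟨r, hr⟩ ⟨v, hv⟩ by
    have : Nonempty ↥(G.descendants r x)ᶜ := ⟨⟨r, hr⟩⟩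
    exact .mk fun a b => (h _ a a.2 rfl).symm.trans (h _ b b.2 rfl)
  intro n
  induction n with
  | zero =>
    intro v hv hrv
    obtain rfl := hG.dist_eq_zero_iff.mp hrv
    rfl
  | succ n ih =>
    intro v hv hrv
    obtain ⟨w, hwv, hw⟩ := hG.exists_adj_dist_add_one_eq (r := r) (v := v)
      (by rintro rfl; simp at hrv)
    have hwD : w ∉ G.descendants r x := fun hwD => hv (hG.mem_descendants_of_adj hwD hwv hw.symm)
    exact (ih w hwD (by omega)).trans (Adj.reachable (by simpa using hwv))

theorem IsTree.induce_compl_descendants (hG : G.IsTree) {r x : V} (hx : x ≠ r) :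
    (G.induce (G.descendants r x)ᶜ).IsTree :=
  ⟨hG.connected.induce_compl_descendants hx, hG.isAcyclic.induce _⟩

theorem IsTree.eq_of_adj_of_mem_descendants_of_notMem (hG : G.IsTree) {r x u w : V}
    (hu : u ∈ G.descendants r x) (hw : w ∉ G.descendants r x) (hadj : G.Adj u w) :
    u = x ∧ G.dist r w + 1 = G.dist r x := by
  have hwu : G.dist r w + 1 = G.dist r u := by
    rcases hG.dist_eq_dist_add_one_of_adj r hadj with h | h
    · exact h.symm
    · exact absurd (hG.connected.mem_descendants_of_adj hu hadj h) hw
  suffices hux : u = x from ⟨hux, hux ▸ hwu⟩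
  by_contra hux
  -- the neighbour `q` of `u` towards `x` is also the neighbour of `u` towards `r`, i.e. `w`
  obtain ⟨q, hqu, hq⟩ := hG.connected.exists_adj_dist_add_one_eq (r := x) hux
  have hrq := hG.connected.dist_triangle (u := r) (v := x) (w := q)
  have hru := hG.connected.dist_triangle (u := r) (v := q) (w := u)
  rw [dist_eq_one_iff_adj.mpr hqu] at hru
  simp only [descendants, Set.mem_ofPred_eq] at hu hw
  have hqw := hG.eq_of_adj_of_dist_add_one_eq hqu hadj.symm (by omega) hwu
  subst hqw
  omega

theorem IsTree.neighborSet_subset_compl_descendants (hG : G.IsTree) {r x y z : V}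
    (hyx : G.Adj y x) (hy : G.dist r y + 1 = G.dist r x) (hz : z ∉ G.descendants r x)
    (hzy : z ≠ y) : G.neighborSet z ⊆ (G.descendants r x)ᶜ := by
  intro w hzw hw
  obtain ⟨rfl, hz'⟩ := hG.eq_of_adj_of_mem_descendants_of_notMem hw hz hzw.symm
  exact hzy (hG.eq_of_adj_of_dist_add_one_eq hzw hyx hz' hy)

theorem IsTree.ncard_descendants_add_two_le [Fintype V] [DecidableRel G.Adj] (hG : G.IsTree)
    {r u v : V} (hadj : G.Adj u v) (huv : G.dist r u = G.dist r v + 1) (hv : v ≠ r) :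
    (G.descendants r u).ncard + (G.descendants r u ∩ {w | G.degree w = 2}).ncard + 2 ≤
      (G.descendants r v).ncard + (G.descendants r v ∩ {w | G.degree w = 2}).ncard := by
  set A := {w | G.degree w = 2}
  have hvv := mem_descendants_self (G := G) r v
  have hsub := hG.connected.descendants_subset_of_mem
    (hG.connected.mem_descendants_of_adj hvv hadj.symm huv)
  have hvu : v ∉ G.descendants r u := by
    simp only [descendants, Set.mem_ofPred_eq]
    omega
  by_cases hvA : v ∈ A
  · have hD := Set.ncard_le_ncard (Set.insert_subset hvv hsub)
    have hDA := Set.ncard_le_ncard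
      (Set.insert_subset (show v ∈ G.descendants r v ∩ A from ⟨hvv, hvA⟩)
        (Set.inter_subset_inter_left A hsub))
    rw [Set.ncard_insert_of_notMem hvu] at hD
    rw [Set.ncard_insert_of_notMem (fun h => hvu h.1)] at hDA
    omega
  -- otherwise `v` has a child `w` besides `u`, which is a descendant of `v` but not of `u`
  obtain ⟨p, hpv, hp⟩ := hG.connected.exists_adj_dist_add_one_eq hv
  obtain ⟨w, hvw, hwu, hwp⟩ :=
    exists_adj_ne_ne_of_degree_ne_two hadj.symm hpv.symm (by rintro rfl; omega) hvA
  have hw : G.dist r w = G.dist r v + 1 := by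
    rcases hG.dist_eq_dist_add_one_of_adj r hvw with h | h
    · exact absurd (hG.eq_of_adj_of_dist_add_one_eq hvw.symm hpv h.symm hp) hwp
    · exact h
  have hwv : w ∉ insert v (G.descendants r u) := by
    have huw : G.dist u w ≠ 0 := hG.connected.dist_eq_zero_iff.not.mpr hwu.symm
    simp only [Set.mem_insert_iff, descendants, Set.mem_ofPred_eq, not_or]
    exact ⟨hvw.ne', by omega⟩
  have hD := Set.ncard_le_ncard <| Set.insert_subset
    (hG.connected.mem_descendants_of_adj hvv hvw hw) (Set.insert_subset hvv hsub)
  have hDA := Set.ncard_le_ncard (Set.inter_subset_inter_left A hsub)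
  rw [Set.ncard_insert_of_notMem hwv, Set.ncard_insert_of_notMem hvu] at hD
  omega

theorem IsTree.two_mul_dist_add_one_le_ncard_descendants [Fintype V] [DecidableRel G.Adj]
    (hG : G.IsTree) {r x ℓ : V} (hx : x ≠ r) (hℓ : ℓ ∈ G.descendants r x) :
    2 * G.dist x ℓ + 1 ≤
      (G.descendants r x).ncard + (G.descendants r x ∩ {w | G.degree w = 2}).ncard := by
  induction h : G.dist x ℓ generalizing x with
  | zero =>
    have := (Set.ncard_pos (s := G.descendants r x)).2 ⟨x, mem_descendants_self r x⟩
    omega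
  | succ j ih =>
    obtain ⟨u, hux, hu⟩ := hG.connected.exists_adj_dist_add_one_eq (r := ℓ) (v := x)
      (by rintro rfl; simp at h)
    have hru := hG.connected.dist_triangle (u := r) (v := x) (w := u)
    have hrℓ := hG.connected.dist_triangle (u := r) (v := u) (w := ℓ)
    rw [dist_eq_one_iff_adj.mpr hux.symm] at hru
    rw [G.dist_comm (u := ℓ), G.dist_comm (u := ℓ)] at hu
    simp only [descendants, Set.mem_ofPred_eq] at hℓ
    have huD : ℓ ∈ G.descendants r u := by
      simp only [descendants, Set.mem_ofPred_eq]
      omega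
    have := ih (x := u) (by rintro rfl; omega) huD (by omega)
    have := hG.ncard_descendants_add_two_le hux (by omega) hx
    omega

theorem IsTree.exists_descendants_of_lt_dist [Fintype V] [DecidableRel G.Adj] (hG : G.IsTree)
    {r ℓ : V} {k : ℕ} (hℓ : ∀ v, G.dist r v ≤ G.dist r ℓ) (hk : k < G.dist r ℓ) :
    ∃ x ≠ r, (∀ v ∈ G.descendants r x, G.dist x v ≤ k) ∧
      2 * k + 1 ≤ (G.descendants r x).ncard + (G.descendants r x ∩ {w | G.degree w = 2}).ncard := by
  obtain ⟨x, hrx, hxℓ⟩ := hG.connected.exists_dist_eq_and_dist_eq (u := r) (v := ℓ)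
    (a := G.dist r ℓ - k) (b := k) (by omega)
  have hxr : x ≠ r := by rintro rfl; rw [dist_self] at hrx; omega
  have hℓD : ℓ ∈ G.descendants r x := by
    simp only [descendants, Set.mem_ofPred_eq]
    omega
  refine ⟨x, hxr, fun v hv => ?_, hxℓ ▸ hG.two_mul_dist_add_one_le_ncard_descendants hxr hℓD⟩
  have hrv := hℓ v
  simp only [descendants, Set.mem_ofPred_eq] at hv
  omega

end SimpleGraph

def IsBurningSequence {V : Type*} (G : SimpleGraph V) {k : ℕ} (x : Fin k → V) : Prop :=
  ∀ v : V, ∃ i : Fin k, v ∈ ball G (x i) (k - 1 - i)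

theorem burningNumber_le {V : Type*} {G : SimpleGraph V} {k : ℕ} {x : Fin k → V}
    (hx : IsBurningSequence G x) : burningNumber G ≤ k :=
  Nat.sInf_le ⟨x, hx⟩

theorem SimpleGraph.Connected.isBurningSequence_cons {V : Type*} {G : SimpleGraph V}
    (hG : G.Connected) {k : ℕ} {x : V} {s : Set V} (hx : ∀ v ∉ s, G.dist x v ≤ k)
    {y : Fin k → s} (hy : IsBurningSequence (G.induce s) y) :
    IsBurningSequence G (Fin.cons x (Subtype.val ∘ y) : Fin (k + 1) → V) := by
  intro v
  by_cases hv : v ∈ s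
  · obtain ⟨i, hreach, hi⟩ := hy ⟨v, hv⟩
    refine ⟨i.succ, hG.preconnected _ _, ?_⟩
    have : G.dist (y i) v ≤ k - 1 - i := ((Embedding.induce s).toHom.dist_le hreach).trans hi
    simp only [Fin.cons_succ, Function.comp_apply, Fin.val_succ]
    omega
  · exact ⟨0, hG.preconnected _ _, by simpa using hx v hv⟩

theorem SimpleGraph.IsTree.exists_isBurningSequence {V : Type*} [Fintype V] {T : SimpleGraph V}
    [DecidableRel T.Adj] (hT : T.IsTree) {k : ℕ}
    (h : Fintype.card V + {v | T.degree v = 2}.ncard ≤ k * (k - 1)) :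
    ∃ x : Fin k → V, IsBurningSequence T x := by
  induction k generalizing V with
  | zero =>
    have := Fintype.card_pos_iff.mpr hT.connected.nonempty
    simp only [zero_mul] at h
    omega
  | succ k ih =>
    classical
    have := hT.connected.nonempty
    obtain ⟨r⟩ := hT.connected.nonempty
    obtain ⟨ℓ, hℓ⟩ := Finite.exists_max (T.dist r)
    by_cases hd : T.dist r ℓ ≤ k
    · refine ⟨fun _ => r, fun v => ⟨0, hT.connected.preconnected r v, ?_⟩⟩
      simpa using (hℓ v).trans hd
    obtain ⟨x, hxr, hxD, hD⟩ := hT.exists_descendants_of_lt_dist hℓ (not_le.mp hd)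
    obtain ⟨y, hyx, hy⟩ := hT.connected.exists_adj_dist_add_one_eq hxr
    have hdeg := SimpleGraph.ncard_degree_induce_eq_two_le (s := (T.descendants r x)ᶜ) y
      fun z hz hzy => hT.neighborSet_subset_compl_descendants hyx hy hz hzy
    have hcard : Fintype.card ↥(T.descendants r x)ᶜ + (T.descendants r x).ncard =
        Fintype.card V := by
      rw [← Nat.card_eq_fintype_card, Nat.card_coe_set_eq, add_comm, Set.ncard_add_ncard_compl,
        Nat.card_eq_fintype_card]
    have hA := Set.ncard_inter_add_ncard_sdiff_eq_ncard {v | T.degree v = 2} (T.descendants r x)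
    rw [Set.sdiff_eq, Set.inter_comm _ (T.descendants r x)] at hA
    have hk : (k + 1) * (k + 1 - 1) = k * (k - 1) + 2 * k := by
      cases k with
      | zero => rfl
      | succ k => rw [Nat.add_one_sub_one, Nat.add_one_sub_one]; ring
    obtain ⟨z, hz⟩ := ih (hT.induce_compl_descendants hxr) (by omega)
    exact ⟨_, hT.connected.isBurningSequence_cons
      (fun v hv => hxD v (Set.notMem_compl_iff.mp hv)) hz⟩

theorem le_ceil_mul_ceil_sub_one (m : ℕ) :
    m ≤ ⌈√((m : ℝ) + 1 / 4) + 1 / 2⌉₊ * (⌈√((m : ℝ) + 1 / 4) + 1 / 2⌉₊ - 1) := by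
  set k := ⌈√((m : ℝ) + 1 / 4) + 1 / 2⌉₊
  have hk : √((m : ℝ) + 1 / 4) + 1 / 2 ≤ k := Nat.le_ceil _
  have hk1 : 1 ≤ k := Nat.one_le_ceil_iff.mpr (by positivity)
  have hsq := Real.sq_sqrt (show (0 : ℝ) ≤ m + 1 / 4 by positivity)
  rw [← Nat.cast_le (α := ℝ), Nat.cast_mul, Nat.cast_sub hk1, Nat.cast_one]
  nlinarith [Real.sqrt_nonneg ((m : ℝ) + 1 / 4)]

theorem burning_tree_le_ceil_sqrt_n_add_n2 {V : Type*} [Fintype V]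
    (T : SimpleGraph V) [DecidableRel T.Adj] (hT : T.IsTree) (n2 : ℕ)
    (hn2 : {v : V | T.degree v = 2}.ncard = n2) :
    burningNumber T ≤
      ⌈Real.sqrt (((Fintype.card V : ℝ) + n2) + 1 / 4) + 1 / 2⌉₊ := by
  subst hn2
  have h := le_ceil_mul_ceil_sub_one (Fintype.card V + {v : V | T.degree v = 2}.ncard)
  push_cast at h
  obtain ⟨x, hx⟩ := hT.exists_isBurningSequence h
  exact burningNumber_le hx
end
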